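/- Let A_1, B_1 be finite index types with |A_1| = |B_1| = d_1 ≥ 1 and A_2, B_2 be finite index types with |A_2| = |B_2| = d_2 ≥ 1. Let R be a positive semidefinite complex matrix indexed by (A_1 × B_1 × A_2 × B_2) × (A_1 × B_1 × A_2 × B_2). Then Tr[Rᵀ (C_1 ⊗ C_2)] = 1 holds for every pair of bistochastic channel Choi operators C_1 (indexed by A_1 × B_1) and C_2 (indexed by A_2 × B_2) if and only if R = (1/(d_1·d_2))·1 + X, where X is a Hermitian matrix with Tr[X] = 0 satisfying Tr[X·(T_1 ⊗ T_2 ⊗ 1_{A_2 × B_2})] = 0, Tr[X·(1_{A_1 × B_1} ⊗ T_3 ⊗ T_4)] = 0, and Tr[X·(T_1 ⊗ T_2 ⊗ T_3 ⊗ T_4)] = 0 for all traceless Hermitian matrices T_1 (indexed by A_1), T_2 (indexed by B_1), T_3 (indexed by A_2), T_4 (indexed by B_2). -/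

import Mathlib

open Matrix ComplexOrder

/-- The tensor (Kronecker) product of a matrix on `A1 × B1` and a matrix on `A2 × B2`,
indexed by `A1 × B1 × A2 × B2`. -/
noncomputable def kron2 {A1 B1 A2 B2 : Type*}
    (C1 : Matrix (A1 × B1) (A1 × B1) ℂ) (C2 : Matrix (A2 × B2) (A2 × B2) ℂ) :
    Matrix (A1 × B1 × A2 × B2) (A1 × B1 × A2 × B2) ℂ :=
  Matrix.of fun u u' =>
    C1 (u.1, u.2.1) (u'.1, u'.2.1) * C2 (u.2.2.1, u.2.2.2) (u'.2.2.1, u'.2.2.2)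

/-!
With `X = R - (d₁ d₂)⁻¹ • 1`, on bistochastic Choi matrices
`Tr[Rᵀ (C₁ ⊗ C₂)] = Tr[X (C₁ᵀ ⊗ C₂ᵀ)] + 1`, and transposition preserves bistochastic Choi matrices;
so the condition says that the bilinear form `(C₁, C₂) ↦ Tr[X (C₁ ⊗ C₂)]` vanishes on pairs of
bistochastic Choi matrices. Slot by slot, a linear functional vanishes on the bistochastic Choi
matrices on `A × B` iff it vanishes on `1` and on all `T ⊗ T'` with `T`, `T'` traceless Hermitian:
`C - d⁻¹ • 1` has vanishing partial traces, and such matrices are spanned by the `T ⊗ T'` (the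
linear map `E ⊗ F ↦ (E - (tr E / d) • 1) ⊗ (F - (tr F / d) • 1)` fixes them); conversely
`d⁻¹ • 1 + ε • (T ⊗ T')` is a bistochastic Choi matrix for small `ε > 0`.
-/

open scoped Kronecker

namespace Matrix

section PartialTrace

variable {A B R : Type*} [CommSemiring R]

def traceRight [Fintype B] : Matrix (A × B) (A × B) R →ₗ[R] Matrix A A R where
  toFun M := of fun a a' => ∑ b, M (a, b) (a', b)
  map_add' M N := by ext; simp [Finset.sum_add_distrib]
  map_smul' r M := by ext; simp [Finset.mul_sum]

def traceLeft [Fintype A] : Matrix (A × B) (A × B) R →ₗ[R] Matrix B B R where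
  toFun M := of fun b b' => ∑ a, M (a, b) (a, b')
  map_add' M N := by ext; simp [Finset.sum_add_distrib]
  map_smul' r M := by ext; simp [Finset.mul_sum]

@[simp]
theorem traceRight_apply [Fintype B] (M : Matrix (A × B) (A × B) R) (a a' : A) :
    traceRight M a a' = ∑ b, M (a, b) (a', b) := rfl

@[simp]
theorem traceLeft_apply [Fintype A] (M : Matrix (A × B) (A × B) R) (b b' : B) :
    traceLeft M b b' = ∑ a, M (a, b) (a, b') := rfl

theorem traceRight_kronecker [Fintype B] (X : Matrix A A R) (Y : Matrix B B R) :
    traceRight (X ⊗ₖ Y) = Y.trace • X := by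
  ext; simp [trace, Finset.mul_sum, mul_comm]

theorem traceLeft_kronecker [Fintype A] (X : Matrix A A R) (Y : Matrix B B R) :
    traceLeft (X ⊗ₖ Y) = X.trace • Y := by
  ext; simp [trace, Finset.sum_mul]

theorem traceRight_transpose [Fintype B] (M : Matrix (A × B) (A × B) R) :
    traceRight Mᵀ = (traceRight M)ᵀ := rfl

theorem traceLeft_transpose [Fintype A] (M : Matrix (A × B) (A × B) R) :
    traceLeft Mᵀ = (traceLeft M)ᵀ := rfl

theorem trace_traceRight [Fintype A] [Fintype B] (M : Matrix (A × B) (A × B) R) :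
    (traceRight M).trace = M.trace := by
  simp [trace, Fintype.sum_prod_type]

theorem traceRight_one [Fintype B] [DecidableEq A] [DecidableEq B] :
    traceRight (1 : Matrix (A × B) (A × B) R) = (Fintype.card B : R) • 1 := by
  rw [← one_kronecker_one, traceRight_kronecker, trace_one]

theorem traceLeft_one [Fintype A] [DecidableEq A] [DecidableEq B] :
    traceLeft (1 : Matrix (A × B) (A × B) R) = (Fintype.card A : R) • 1 := by
  rw [← one_kronecker_one, traceLeft_kronecker, trace_one]

theorem trace_eq_card_of_traceRight_eq_one [Fintype A] [Fintype B] [DecidableEq A]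
    {M : Matrix (A × B) (A × B) R} (h : traceRight M = 1) : M.trace = Fintype.card A := by
  rw [← trace_traceRight, h, trace_one]

theorem traceRight_eq_one_iff [Fintype B] [DecidableEq A] (M : Matrix (A × B) (A × B) R) :
    traceRight M = 1 ↔ ∀ a a', ∑ b, M (a, b) (a', b) = if a = a' then 1 else 0 := by
  simp [← Matrix.ext_iff, one_apply]

theorem traceLeft_eq_one_iff [Fintype A] [DecidableEq B] (M : Matrix (A × B) (A × B) R) :
    traceLeft M = 1 ↔ ∀ b b', ∑ a, M (a, b) (a, b') = if b = b' then 1 else 0 := by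
  simp [← Matrix.ext_iff, one_apply]

end PartialTrace

theorem sub_kronecker {l m n p α : Type*} [NonUnitalNonAssocRing α] (X₁ X₂ : Matrix l m α)
    (Y : Matrix n p α) : (X₁ - X₂) ⊗ₖ Y = X₁ ⊗ₖ Y - X₂ ⊗ₖ Y := by
  ext; simp [sub_mul]

theorem kronecker_sub {l m n p α : Type*} [NonUnitalNonAssocRing α] (X : Matrix l m α)
    (Y₁ Y₂ : Matrix n p α) : X ⊗ₖ (Y₁ - Y₂) = X ⊗ₖ Y₁ - X ⊗ₖ Y₂ := by
  ext; simp [mul_sub]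

section TracelessDecomposition

variable {n A B 𝕜 : Type*} [Field 𝕜]

def tracelessPart [Fintype n] [DecidableEq n] (M : Matrix n n 𝕜) : Matrix n n 𝕜 :=
  M - (M.trace / Fintype.card n) • 1

theorem trace_tracelessPart [Fintype n] [DecidableEq n] (hn : (Fintype.card n : 𝕜) ≠ 0)
    (M : Matrix n n 𝕜) : (tracelessPart M).trace = 0 := by
  simp [tracelessPart, hn]

variable [Fintype A] [Fintype B] [DecidableEq A] [DecidableEq B]

def bipartiteTracelessPart (M : Matrix (A × B) (A × B) 𝕜) : Matrix (A × B) (A × B) 𝕜 :=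
  M - (Fintype.card B : 𝕜)⁻¹ • (traceRight M ⊗ₖ 1) - (Fintype.card A : 𝕜)⁻¹ • (1 ⊗ₖ traceLeft M)
    + (M.trace / (Fintype.card A * Fintype.card B)) • 1

theorem bipartiteTracelessPart_add (M N : Matrix (A × B) (A × B) 𝕜) :
    bipartiteTracelessPart (M + N) = bipartiteTracelessPart M + bipartiteTracelessPart N := by
  simp only [bipartiteTracelessPart, map_add, add_kronecker, kronecker_add, trace_add, add_div,
    add_smul, smul_add]
  abel

theorem tracelessPart_kronecker_tracelessPart (X : Matrix A A 𝕜) (Y : Matrix B B 𝕜) :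
    tracelessPart X ⊗ₖ tracelessPart Y = bipartiteTracelessPart (X ⊗ₖ Y) := by
  simp only [tracelessPart, bipartiteTracelessPart, traceRight_kronecker, traceLeft_kronecker,
    trace_kronecker, sub_kronecker, kronecker_sub, smul_kronecker, kronecker_smul,
    one_kronecker_one]
  module

theorem bipartiteTracelessPart_eq_self {M : Matrix (A × B) (A × B) 𝕜}
    (hright : traceRight M = 0) (hleft : traceLeft M = 0) : bipartiteTracelessPart M = M := by
  have htrace : M.trace = 0 := by rw [← trace_traceRight, hright, trace_zero]
  simp [bipartiteTracelessPart, hright, hleft, htrace]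

theorem bipartiteTracelessPart_mem_span (hA : (Fintype.card A : 𝕜) ≠ 0)
    (hB : (Fintype.card B : 𝕜) ≠ 0) (M : Matrix (A × B) (A × B) 𝕜) :
    bipartiteTracelessPart M ∈ Submodule.span 𝕜
      (Set.image2 (· ⊗ₖ ·) {X : Matrix A A 𝕜 | X.trace = 0} {Y : Matrix B B 𝕜 | Y.trace = 0}) := by
  induction M using Matrix.induction_on' with
  | h_zero => simp [bipartiteTracelessPart]
  | h_add M N hM hN => rw [bipartiteTracelessPart_add]; exact add_mem hM hN
  | h_std_basis i j x =>
    obtain ⟨a, b⟩ := i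
    obtain ⟨a', b'⟩ := j
    rw [← mul_one x, ← single_kronecker_single, ← tracelessPart_kronecker_tracelessPart]
    exact Submodule.subset_span
      ⟨_, trace_tracelessPart hA _, _, trace_tracelessPart hB _, rfl⟩

theorem mem_span_kronecker_of_traceRight_eq_zero (hA : (Fintype.card A : 𝕜) ≠ 0)
    (hB : (Fintype.card B : 𝕜) ≠ 0) {M : Matrix (A × B) (A × B) 𝕜}
    (hright : traceRight M = 0) (hleft : traceLeft M = 0) :
    M ∈ Submodule.span 𝕜
      (Set.image2 (· ⊗ₖ ·) {X : Matrix A A 𝕜 | X.trace = 0} {Y : Matrix B B 𝕜 | Y.trace = 0}) :=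
  bipartiteTracelessPart_eq_self hright hleft ▸ bipartiteTracelessPart_mem_span hA hB M

end TracelessDecomposition

section Hermitian

open scoped ComplexStarModule

variable {n A B : Type*}

theorem mem_span_isHermitian_of_trace_eq_zero [Fintype n] {T : Matrix n n ℂ} (hT : T.trace = 0) :
    T ∈ Submodule.span ℂ {H : Matrix n n ℂ | H.IsHermitian ∧ H.trace = 0} := by
  have hstar : (star T).trace = 0 := by
    rw [star_eq_conjTranspose, trace_conjTranspose, hT, star_zero]
  rw [← realPart_add_I_smul_imaginaryPart T]
  refine add_mem (Submodule.subset_span ⟨(ℜ T).2, ?_⟩)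
    (Submodule.smul_mem _ _ (Submodule.subset_span ⟨(ℑ T).2, ?_⟩))
  · rw [realPart_apply_coe, trace_smul, trace_add, hT, hstar, add_zero, smul_zero]
  · rw [imaginaryPart_apply_coe, trace_smul, trace_smul, trace_sub, hT, hstar, sub_zero,
      smul_zero, smul_zero]

theorem mem_span_kronecker_isHermitian_of_traceRight_eq_zero [Fintype A] [Fintype B]
    [DecidableEq A] [DecidableEq B] [Nonempty A] [Nonempty B] {M : Matrix (A × B) (A × B) ℂ}
    (hright : traceRight M = 0) (hleft : traceLeft M = 0) :
    M ∈ Submodule.span ℂ (Set.image2 (· ⊗ₖ ·)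
      {X : Matrix A A ℂ | X.IsHermitian ∧ X.trace = 0}
      {Y : Matrix B B ℂ | Y.IsHermitian ∧ Y.trace = 0}) := by
  refine Submodule.span_le.2 ?_ (mem_span_kronecker_of_traceRight_eq_zero
    (Nat.cast_ne_zero.2 Fintype.card_ne_zero) (Nat.cast_ne_zero.2 Fintype.card_ne_zero)
    hright hleft)
  rintro _ ⟨X, hX, Y, hY, rfl⟩
  have hXY := Submodule.apply_mem_map₂ (kroneckerBilinear (R := ℂ))
    (mem_span_isHermitian_of_trace_eq_zero hX) (mem_span_isHermitian_of_trace_eq_zero hY)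
  rwa [Submodule.map₂_span_span] at hXY

open scoped MatrixOrder Matrix.Norms.L2Operator in
theorem exists_pos_posSemidef_smul_one_add [Fintype n] [DecidableEq n] {K : Matrix n n ℂ}
    (hK : K.IsHermitian) : ∃ r : ℝ, 0 < r ∧ ((r : ℂ) • 1 + K).PosSemidef := by
  refine ⟨‖K‖ + 1, by positivity, ?_⟩
  have hnorm := IsSelfAdjoint.neg_algebraMap_norm_le_self hK.isSelfAdjoint
  rw [neg_le_iff_add_nonneg', Algebra.algebraMap_eq_smul_one] at hnorm
  have hsplit : (((‖K‖ + 1 : ℝ) : ℂ) • 1 + K : Matrix n n ℂ) = (‖K‖ • 1 + K) + 1 := by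
    rw [Complex.ofReal_add, Complex.ofReal_one, add_smul, one_smul, Complex.coe_smul]
    abel
  rw [hsplit]
  exact hnorm.posSemidef.add PosSemidef.one

end Hermitian

section Bistochastic

variable {A B A' B' : Type*} [Fintype A] [Fintype B] [DecidableEq A] [DecidableEq B]
  [Fintype A'] [Fintype B'] [DecidableEq A'] [DecidableEq B']

def IsBistochasticChoi (C : Matrix (A × B) (A × B) ℂ) : Prop :=
  C.PosSemidef ∧ traceRight C = 1 ∧ traceLeft C = 1

theorem isBistochasticChoi_iff (C : Matrix (A × B) (A × B) ℂ) :
    IsBistochasticChoi C ↔ C.PosSemidef ∧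
      (∀ a a', ∑ b, C (a, b) (a', b) = if a = a' then 1 else 0) ∧
      (∀ b b', ∑ a, C (a, b) (a, b') = if b = b' then 1 else 0) := by
  rw [IsBistochasticChoi, traceRight_eq_one_iff, traceLeft_eq_one_iff]

theorem IsBistochasticChoi.transpose {C : Matrix (A × B) (A × B) ℂ} (hC : IsBistochasticChoi C) :
    IsBistochasticChoi Cᵀ :=
  ⟨hC.1.transpose, by rw [traceRight_transpose, hC.2.1, transpose_one],
    by rw [traceLeft_transpose, hC.2.2, transpose_one]⟩

theorem isBistochasticChoi_inv_smul_one {d : ℕ} (hA : Fintype.card A = d)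
    (hB : Fintype.card B = d) (hd : d ≠ 0) :
    IsBistochasticChoi ((d : ℂ)⁻¹ • (1 : Matrix (A × B) (A × B) ℂ)) := by
  have hd' : (d : ℂ) ≠ 0 := Nat.cast_ne_zero.2 hd
  refine ⟨PosSemidef.one.smul (by positivity), ?_, ?_⟩
  · rw [map_smul, traceRight_one, hB, smul_smul, inv_mul_cancel₀ hd', one_smul]
  · rw [map_smul, traceLeft_one, hA, smul_smul, inv_mul_cancel₀ hd', one_smul]

theorem exists_isBistochasticChoi_inv_smul_one_add_smul {d : ℕ} (hA : Fintype.card A = d)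
    (hB : Fintype.card B = d) (hd : d ≠ 0) {K : Matrix (A × B) (A × B) ℂ} (hK : K.IsHermitian)
    (hright : traceRight K = 0) (hleft : traceLeft K = 0) :
    ∃ ε : ℂ, ε ≠ 0 ∧ IsBistochasticChoi ((d : ℂ)⁻¹ • 1 + ε • K) := by
  obtain ⟨r, hr, hpsd⟩ := exists_pos_posSemidef_smul_one_add hK
  have hC := isBistochasticChoi_inv_smul_one hA hB hd
  have hd' : (d : ℂ) ≠ 0 := Nat.cast_ne_zero.2 hd
  have hr' : (r : ℂ) ≠ 0 := Complex.ofReal_ne_zero.2 hr.ne'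
  refine ⟨((d : ℂ) * r)⁻¹, inv_ne_zero (mul_ne_zero hd' hr'), ?_, ?_, ?_⟩
  · have hscale : (d : ℂ)⁻¹ • (1 : Matrix (A × B) (A × B) ℂ) + ((d : ℂ) * r)⁻¹ • K
        = ((d : ℂ) * r)⁻¹ • ((r : ℂ) • 1 + K) := by
      rw [smul_add, smul_smul, mul_inv, mul_assoc, inv_mul_cancel₀ hr', mul_one]
    rw [hscale]
    exact hpsd.smul (by positivity)
  · rw [map_add, hC.2.1, map_smul, hright, smul_zero, add_zero]
  · rw [map_add, hC.2.2, map_smul, hleft, smul_zero, add_zero]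

theorem forall_isBistochasticChoi_map_eq_zero_iff {d : ℕ} (hA : Fintype.card A = d)
    (hB : Fintype.card B = d) (hd : d ≠ 0) (f : Matrix (A × B) (A × B) ℂ →ₗ[ℂ] ℂ) :
    (∀ C, IsBistochasticChoi C → f C = 0) ↔
      f 1 = 0 ∧ ∀ (T1 : Matrix A A ℂ) (T2 : Matrix B B ℂ),
        T1.IsHermitian → T1.trace = 0 → T2.IsHermitian → T2.trace = 0 → f (T1 ⊗ₖ T2) = 0 := by
  have hC := isBistochasticChoi_inv_smul_one hA hB hd
  have hd' : (d : ℂ)⁻¹ ≠ 0 := inv_ne_zero (Nat.cast_ne_zero.2 hd)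
  constructor
  · intro hf
    refine ⟨by simpa [hd'] using hf _ hC, fun T1 T2 h1 t1 h2 t2 => ?_⟩
    obtain ⟨ε, hε, hCε⟩ := exists_isBistochasticChoi_inv_smul_one_add_smul hA hB hd
      (by rw [IsHermitian, conjTranspose_kronecker, h1.eq, h2.eq])
      (by rw [traceRight_kronecker, t2, zero_smul]) (by rw [traceLeft_kronecker, t1, zero_smul])
    have hfε := hf _ hCε
    rw [map_add, hf _ hC, zero_add, map_smul, smul_eq_mul] at hfε
    exact (mul_eq_zero.1 hfε).resolve_left hε
  · rintro ⟨hf1, hfT⟩ C ⟨-, hright, hleft⟩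
    have : Nonempty A := Fintype.card_pos_iff.1 (hA ▸ Nat.pos_of_ne_zero hd)
    have : Nonempty B := Fintype.card_pos_iff.1 (hB ▸ Nat.pos_of_ne_zero hd)
    have hspan := mem_span_kronecker_isHermitian_of_traceRight_eq_zero
      (M := C - (d : ℂ)⁻¹ • 1) (by rw [map_sub, hright, hC.2.1, sub_self])
      (by rw [map_sub, hleft, hC.2.2, sub_self])
    have hker : f (C - (d : ℂ)⁻¹ • 1) = 0 := by
      refine Submodule.span_le (p := LinearMap.ker f).2 ?_ hspan
      rintro _ ⟨T1, ⟨h1, t1⟩, T2, ⟨h2, t2⟩, rfl⟩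
      exact hfT T1 T2 h1 t1 h2 t2
    rwa [map_sub, map_smul, hf1, smul_zero, sub_zero] at hker

theorem forall_isBistochasticChoi_map₂_eq_zero_iff {d d' : ℕ} (hA : Fintype.card A = d)
    (hB : Fintype.card B = d) (hd : d ≠ 0) (hA' : Fintype.card A' = d')
    (hB' : Fintype.card B' = d') (hd' : d' ≠ 0)
    (φ : Matrix (A × B) (A × B) ℂ →ₗ[ℂ] Matrix (A' × B') (A' × B') ℂ →ₗ[ℂ] ℂ) :
    (∀ C C', IsBistochasticChoi C → IsBistochasticChoi C' → φ C C' = 0) ↔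
      φ 1 1 = 0 ∧
      (∀ (T1 : Matrix A A ℂ) (T2 : Matrix B B ℂ),
        T1.IsHermitian → T1.trace = 0 → T2.IsHermitian → T2.trace = 0 →
        φ (T1 ⊗ₖ T2) 1 = 0) ∧
      (∀ (T3 : Matrix A' A' ℂ) (T4 : Matrix B' B' ℂ),
        T3.IsHermitian → T3.trace = 0 → T4.IsHermitian → T4.trace = 0 →
        φ 1 (T3 ⊗ₖ T4) = 0) ∧
      (∀ (T1 : Matrix A A ℂ) (T2 : Matrix B B ℂ) (T3 : Matrix A' A' ℂ) (T4 : Matrix B' B' ℂ),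
        T1.IsHermitian → T1.trace = 0 → T2.IsHermitian → T2.trace = 0 →
        T3.IsHermitian → T3.trace = 0 → T4.IsHermitian → T4.trace = 0 →
        φ (T1 ⊗ₖ T2) (T3 ⊗ₖ T4) = 0) := by
  have slot := forall_isBistochasticChoi_map_eq_zero_iff hA hB hd
  have slot' := forall_isBistochasticChoi_map_eq_zero_iff hA' hB' hd'
  constructor
  · intro h
    have hslice (C) (hC : IsBistochasticChoi C) := (slot' (φ C)).1 (h C · hC)
    have hone := (slot (φ.flip 1)).1 fun C hC => (hslice C hC).1
    have hT (T3 T4) (h3 t3 h4 t4) := (slot (φ.flip (T3 ⊗ₖ T4))).1 fun C hC =>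
      (hslice C hC).2 T3 T4 h3 t3 h4 t4
    exact ⟨hone.1, hone.2, fun T3 T4 h3 t3 h4 t4 => (hT T3 T4 h3 t3 h4 t4).1,
      fun T1 T2 T3 T4 h1 t1 h2 t2 h3 t3 h4 t4 => (hT T3 T4 h3 t3 h4 t4).2 T1 T2 h1 t1 h2 t2⟩
  · rintro ⟨h11, hT1, h1T, hTT⟩ C C' hC hC'
    refine (slot' (φ C)).2 ⟨(slot (φ.flip 1)).2 ⟨h11, hT1⟩ C hC, ?_⟩ C' hC'
    intro T3 T4 h3 t3 h4 t4
    exact (slot (φ.flip (T3 ⊗ₖ T4))).2 ⟨h1T T3 T4 h3 t3 h4 t4,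
      fun T1 T2 h1 t1 h2 t2 => hTT T1 T2 T3 T4 h1 t1 h2 t2 h3 t3 h4 t4⟩ C hC

end Bistochastic

end Matrix

section Kron2

variable {A1 B1 A2 B2 : Type*}

theorem kron2_add_left (C C' : Matrix (A1 × B1) (A1 × B1) ℂ) (D : Matrix (A2 × B2) (A2 × B2) ℂ) :
    kron2 (C + C') D = kron2 C D + kron2 C' D := by
  ext; simp [kron2, add_mul]

theorem kron2_add_right (C : Matrix (A1 × B1) (A1 × B1) ℂ) (D D' : Matrix (A2 × B2) (A2 × B2) ℂ) :
    kron2 C (D + D') = kron2 C D + kron2 C D' := by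
  ext; simp [kron2, mul_add]

theorem kron2_smul_left (c : ℂ) (C : Matrix (A1 × B1) (A1 × B1) ℂ)
    (D : Matrix (A2 × B2) (A2 × B2) ℂ) : kron2 (c • C) D = c • kron2 C D := by
  ext; simp [kron2, mul_assoc]

theorem kron2_smul_right (c : ℂ) (C : Matrix (A1 × B1) (A1 × B1) ℂ)
    (D : Matrix (A2 × B2) (A2 × B2) ℂ) : kron2 C (c • D) = c • kron2 C D := by
  ext; simp [kron2, mul_left_comm]

theorem transpose_kron2 (C : Matrix (A1 × B1) (A1 × B1) ℂ) (D : Matrix (A2 × B2) (A2 × B2) ℂ) :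
    (kron2 C D)ᵀ = kron2 Cᵀ Dᵀ := rfl

theorem trace_kron2 [Fintype A1] [Fintype B1] [Fintype A2] [Fintype B2]
    (C : Matrix (A1 × B1) (A1 × B1) ℂ) (D : Matrix (A2 × B2) (A2 × B2) ℂ) :
    (kron2 C D).trace = C.trace * D.trace := by
  rw [trace, trace, trace, Finset.sum_mul_sum, ← Fintype.sum_prod_type']
  exact (Fintype.sum_equiv (Equiv.prodAssoc _ _ _) _ _ fun _ => rfl).symm

theorem kron2_one_one [DecidableEq A1] [DecidableEq B1] [DecidableEq A2] [DecidableEq B2] :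
    kron2 (1 : Matrix (A1 × B1) (A1 × B1) ℂ) (1 : Matrix (A2 × B2) (A2 × B2) ℂ) = 1 := by
  ext ⟨a, b, a', b'⟩ ⟨c, e, c', e'⟩
  simp only [kron2, of_apply, one_apply, Prod.mk.injEq]
  split_ifs <;> simp_all

theorem kron2_kronecker_one [DecidableEq A2] [DecidableEq B2] (T1 : Matrix A1 A1 ℂ)
    (T2 : Matrix B1 B1 ℂ) :
    kron2 (T1 ⊗ₖ T2) (1 : Matrix (A2 × B2) (A2 × B2) ℂ) =
      of fun (u u' : A1 × B1 × A2 × B2) =>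
        T1 u.1 u'.1 * T2 u.2.1 u'.2.1 * (if u.2.2 = u'.2.2 then 1 else 0) := by
  ext; simp [kron2, one_apply]

theorem kron2_one_kronecker [DecidableEq A1] [DecidableEq B1] (T3 : Matrix A2 A2 ℂ)
    (T4 : Matrix B2 B2 ℂ) :
    kron2 (1 : Matrix (A1 × B1) (A1 × B1) ℂ) (T3 ⊗ₖ T4) =
      of fun (u u' : A1 × B1 × A2 × B2) =>
        (if (u.1, u.2.1) = (u'.1, u'.2.1) then 1 else 0) *
          T3 u.2.2.1 u'.2.2.1 * T4 u.2.2.2 u'.2.2.2 := by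
  ext; simp [kron2, one_apply]

theorem kron2_kronecker_kronecker (T1 : Matrix A1 A1 ℂ) (T2 : Matrix B1 B1 ℂ)
    (T3 : Matrix A2 A2 ℂ) (T4 : Matrix B2 B2 ℂ) :
    kron2 (T1 ⊗ₖ T2) (T3 ⊗ₖ T4) =
      of fun (u u' : A1 × B1 × A2 × B2) =>
        T1 u.1 u'.1 * T2 u.2.1 u'.2.1 * T3 u.2.2.1 u'.2.2.1 * T4 u.2.2.2 u'.2.2.2 := by
  ext; simp [kron2, mul_assoc]

variable [Fintype A1] [Fintype B1] [Fintype A2] [Fintype B2]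

noncomputable def kron2TraceForm (X : Matrix (A1 × B1 × A2 × B2) (A1 × B1 × A2 × B2) ℂ) :
    Matrix (A1 × B1) (A1 × B1) ℂ →ₗ[ℂ] Matrix (A2 × B2) (A2 × B2) ℂ →ₗ[ℂ] ℂ :=
  LinearMap.mk₂ ℂ (fun C D => (X * kron2 C D).trace)
    (fun C C' D => by rw [kron2_add_left, Matrix.mul_add, trace_add])
    (fun c C D => by rw [kron2_smul_left, Matrix.mul_smul, trace_smul])
    (fun C D D' => by rw [kron2_add_right, Matrix.mul_add, trace_add])
    (fun c C D => by rw [kron2_smul_right, Matrix.mul_smul, trace_smul])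

@[simp]
theorem kron2TraceForm_apply (X : Matrix (A1 × B1 × A2 × B2) (A1 × B1 × A2 × B2) ℂ)
    (C : Matrix (A1 × B1) (A1 × B1) ℂ) (D : Matrix (A2 × B2) (A2 × B2) ℂ) :
    kron2TraceForm X C D = (X * kron2 C D).trace := rfl

theorem trace_transpose_mul_kron2 (X : Matrix (A1 × B1 × A2 × B2) (A1 × B1 × A2 × B2) ℂ)
    (C : Matrix (A1 × B1) (A1 × B1) ℂ) (D : Matrix (A2 × B2) (A2 × B2) ℂ) :
    (Xᵀ * kron2 C D).trace = kron2TraceForm X Cᵀ Dᵀ := by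
  rw [← trace_transpose, transpose_mul, transpose_transpose, trace_mul_comm, transpose_kron2,
    kron2TraceForm_apply]

variable [DecidableEq A1] [DecidableEq B1] [DecidableEq A2] [DecidableEq B2]

theorem kron2TraceForm_sub_smul_one (X : Matrix (A1 × B1 × A2 × B2) (A1 × B1 × A2 × B2) ℂ)
    (c : ℂ) (C : Matrix (A1 × B1) (A1 × B1) ℂ) (D : Matrix (A2 × B2) (A2 × B2) ℂ) :
    kron2TraceForm (X - c • 1) C D = kron2TraceForm X C D - c * (C.trace * D.trace) := by
  simp [Matrix.sub_mul, trace_sub, trace_kron2]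

theorem forall_isBistochasticChoi_trace_transpose_mul_kron2_eq_one_iff {d1 d2 : ℕ}
    (hA1 : Fintype.card A1 = d1) (hd1 : d1 ≠ 0) (hA2 : Fintype.card A2 = d2) (hd2 : d2 ≠ 0)
    (R : Matrix (A1 × B1 × A2 × B2) (A1 × B1 × A2 × B2) ℂ) :
    (∀ C1 C2, IsBistochasticChoi C1 → IsBistochasticChoi C2 → (Rᵀ * kron2 C1 C2).trace = 1) ↔
      ∀ C1 C2, IsBistochasticChoi C1 → IsBistochasticChoi C2 →
        kron2TraceForm (R - ((d1 : ℂ) * (d2 : ℂ))⁻¹ • 1) C1 C2 = 0 := by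
  have hshift (C1 C2) (hC1 : IsBistochasticChoi C1) (hC2 : IsBistochasticChoi C2) :
      (Rᵀ * kron2 C1 C2).trace = kron2TraceForm (R - ((d1 : ℂ) * d2)⁻¹ • 1) C1ᵀ C2ᵀ + 1 := by
    rw [trace_transpose_mul_kron2, kron2TraceForm_sub_smul_one, trace_transpose, trace_transpose,
      trace_eq_card_of_traceRight_eq_one hC1.2.1, trace_eq_card_of_traceRight_eq_one hC2.2.1,
      hA1, hA2, inv_mul_cancel₀ (by simp [hd1, hd2]), sub_add_cancel]
  constructor
  · intro h C1 C2 hC1 hC2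
    have h1 := h C1ᵀ C2ᵀ hC1.transpose hC2.transpose
    rwa [hshift _ _ hC1.transpose hC2.transpose, transpose_transpose, transpose_transpose,
      add_eq_right] at h1
  · intro h C1 C2 hC1 hC2
    rw [hshift _ _ hC1 hC2, h _ _ hC1.transpose hC2.transpose, zero_add]

end Kron2

/-- characterization of deterministic functionals on pairs of bistochastic
channels. A PSD matrix `R` on `A1 × B1 × A2 × B2` satisfies `Tr[Rᵀ (C1 ⊗ C2)] = 1` for
all bistochastic channel Choi operators `C1`, `C2` iff `R = (1/(d1·d2))·1 + X` with `X`
traceless Hermitian orthogonal to `T1⊗T2⊗1`, `1⊗T3⊗T4` and `T1⊗T2⊗T3⊗T4` for all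
traceless Hermitian `T1, T2, T3, T4`. -/
theorem stmt8 {A1 B1 A2 B2 : Type*}
    [Fintype A1] [Fintype B1] [Fintype A2] [Fintype B2]
    [DecidableEq A1] [DecidableEq B1] [DecidableEq A2] [DecidableEq B2]
    (d1 d2 : ℕ) (hd1 : 1 ≤ d1) (hd2 : 1 ≤ d2)
    (hA1 : Fintype.card A1 = d1) (hB1 : Fintype.card B1 = d1)
    (hA2 : Fintype.card A2 = d2) (hB2 : Fintype.card B2 = d2)
    (R : Matrix (A1 × B1 × A2 × B2) (A1 × B1 × A2 × B2) ℂ) (hR : R.PosSemidef) :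
    (∀ (C1 : Matrix (A1 × B1) (A1 × B1) ℂ) (C2 : Matrix (A2 × B2) (A2 × B2) ℂ),
      C1.PosSemidef →
      (∀ a a', (∑ b : B1, C1 (a, b) (a', b)) = if a = a' then 1 else 0) →
      (∀ b b', (∑ a : A1, C1 (a, b) (a, b')) = if b = b' then 1 else 0) →
      C2.PosSemidef →
      (∀ a a', (∑ b : B2, C2 (a, b) (a', b)) = if a = a' then 1 else 0) →
      (∀ b b', (∑ a : A2, C2 (a, b) (a, b')) = if b = b' then 1 else 0) →
      (Rᵀ * kron2 C1 C2).trace = 1) ↔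
    ∃ X : Matrix (A1 × B1 × A2 × B2) (A1 × B1 × A2 × B2) ℂ,
      X.IsHermitian ∧ X.trace = 0 ∧
      (∀ (T1 : Matrix A1 A1 ℂ) (T2 : Matrix B1 B1 ℂ),
        T1.IsHermitian → T1.trace = 0 → T2.IsHermitian → T2.trace = 0 →
        (X * Matrix.of (fun (u u' : A1 × B1 × A2 × B2) =>
          T1 u.1 u'.1 * T2 u.2.1 u'.2.1 *
            (if u.2.2 = u'.2.2 then 1 else 0))).trace = 0) ∧
      (∀ (T3 : Matrix A2 A2 ℂ) (T4 : Matrix B2 B2 ℂ),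
        T3.IsHermitian → T3.trace = 0 → T4.IsHermitian → T4.trace = 0 →
        (X * Matrix.of (fun (u u' : A1 × B1 × A2 × B2) =>
          (if (u.1, u.2.1) = (u'.1, u'.2.1) then 1 else 0) *
            T3 u.2.2.1 u'.2.2.1 * T4 u.2.2.2 u'.2.2.2)).trace = 0) ∧
      (∀ (T1 : Matrix A1 A1 ℂ) (T2 : Matrix B1 B1 ℂ)
         (T3 : Matrix A2 A2 ℂ) (T4 : Matrix B2 B2 ℂ),
        T1.IsHermitian → T1.trace = 0 → T2.IsHermitian → T2.trace = 0 →
        T3.IsHermitian → T3.trace = 0 → T4.IsHermitian → T4.trace = 0 →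
        (X * Matrix.of (fun (u u' : A1 × B1 × A2 × B2) =>
          T1 u.1 u'.1 * T2 u.2.1 u'.2.1 *
            T3 u.2.2.1 u'.2.2.1 * T4 u.2.2.2 u'.2.2.2)).trace = 0) ∧
      R = ((d1 : ℂ) * (d2 : ℂ))⁻¹ • 1 + X := by
  have hd1' : d1 ≠ 0 := by omega
  have hd2' : d2 ≠ 0 := by omega
  have hlhs := forall_isBistochasticChoi_trace_transpose_mul_kron2_eq_one_iff hA1 hd1' hA2 hd2' R
  have hrhs := forall_isBistochasticChoi_map₂_eq_zero_iff hA1 hB1 hd1' hA2 hB2 hd2'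
    (kron2TraceForm (R - ((d1 : ℂ) * d2)⁻¹ • 1))
  simp only [isBistochasticChoi_iff, and_imp, kron2TraceForm_apply] at hlhs hrhs
  simp only [kron2_one_one, mul_one, kron2_kronecker_one, kron2_one_kronecker,
    kron2_kronecker_kronecker] at hrhs
  rw [hlhs, hrhs]
  constructor
  · rintro ⟨h0, h1, h2, h3⟩
    refine ⟨_, hR.isHermitian.sub (isHermitian_one.smul ?_), h0, h1, h2, h3, by abel⟩
    simp [IsSelfAdjoint]
  · rintro ⟨X, -, h0, h1, h2, h3, rfl⟩
    rw [add_sub_cancel_left]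
    exact ⟨h0, h1, h2, h3⟩
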